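/- arXiv:1706.05942 — 4 statements merged into one kernel-verified Lean document; each statement's English description precedes it below -/
import Mathlib

section
/- Let K be an uncountable algebraically closed field and let (C_N)_{N≥N_0} be a decreasing sequence of nonempty constructible subsets of affine space K^d (i.e., C_{N+1} ⊆ C_N, each C_N is a finite union of locally closed sets in the Zariski topology, and each C_N ≠ ∅). Then the intersection ⋂_{N} C_N is nonempty. -/
/-!
The vanishing ideals of the `C N` increase, hence stabilise; let `P` be a minimal prime over the
stable ideal. Since `C N` is constructible and `V(P)` is an irreducible component of its closure,
`C N` contains a basic open subset `V(P) ∩ {a N ≠ 0}` of `V(P)`. Over an uncountable field a field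
extension of countable dimension is algebraic, so every proper ideal of a polynomial ring in
countably many variables has a zero. Applied to `P` together with inverses of all the `a N`, this
gives a point of `V(P)` at which no `a N` vanishes, and that point lies in every `C N`.
-/

/-- Zariski closed subsets of affine `d`-space. -/
def ZariskiClosed {K : Type*} [CommSemiring K] {d : ℕ} (V : Set (Fin d → K)) : Prop :=
  ∃ S : Set (MvPolynomial (Fin d) K), V = {x | ∀ p ∈ S, MvPolynomial.eval x p = 0}

/-- Constructible subsets: finite unions of differences of Zariski closed sets. -/
def ZConstructible {K : Type*} [CommSemiring K] {d : ℕ} (C : Set (Fin d → K)) : Prop :=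
  ∃ (r : ℕ) (W V : Fin r → Set (Fin d → K)),
    (∀ i, ZariskiClosed (W i) ∧ ZariskiClosed (V i)) ∧ C = ⋃ i, W i \ V i

open MvPolynomial

namespace Ideal

variable {R : Type*} [CommRing R] {P : Ideal R}

theorem exists_mem_minimalPrimes_of_mem_minimalPrimes_iInf {ι : Type*} [Finite ι]
    {I : ι → Ideal R} (hP : P ∈ (⨅ i, I i).minimalPrimes) : ∃ i, P ∈ (I i).minimalPrimes := by
  have := Fintype.ofFinite ι
  have : P.IsPrime := hP.1.1
  obtain ⟨i, -, hi⟩ := this.inf_le'.1 ((Finset.inf_univ_eq_iInf I).trans_le hP.1.2)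
  exact ⟨i, ⟨this, hi⟩, fun q hq hqP => hP.2 ⟨hq.1, (iInf_le I i).trans hq.2⟩ hqP⟩

theorem mem_of_mem_minimalPrimes_sInf {s : Set (Ideal R)} (hs : s.Finite)
    (hprime : ∀ q ∈ s, q.IsPrime) (hP : P ∈ (sInf s).minimalPrimes) : P ∈ s := by
  have := hs.to_subtype
  rw [sInf_eq_iInf'] at hP
  obtain ⟨⟨q, hq⟩, hPq⟩ := exists_mem_minimalPrimes_of_mem_minimalPrimes_iInf hP
  have := hprime q hq
  rw [minimalPrimes_eq_subsingleton_self, Set.mem_singleton_iff] at hPq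
  exact hPq ▸ hq

theorem IsRadical.colon_eq_sInf {B : Ideal R} (hB : B.IsRadical) (S : Set R) :
    B.colon S = sInf {q ∈ B.minimalPrimes | ¬ S ⊆ q} := by
  conv_lhs => rw [← hB.radical, ← sInf_minimalPrimes]
  ext f
  simp only [Submodule.mem_colon, mem_sInf, Set.mem_ofPred_eq, smul_eq_mul]
  constructor
  · rintro h q ⟨hq, hSq⟩
    obtain ⟨s, hs, hsq⟩ := Set.not_subset.1 hSq
    exact (hq.1.1.mem_or_mem (h s hs hq)).resolve_right hsq
  · intro h s hs q hq
    by_cases hSq : S ⊆ q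
    · exact q.mul_mem_left f (hSq hs)
    · exact q.mul_mem_right s (h ⟨hq, hSq⟩)

theorem not_subset_of_mem_minimalPrimes_colon [IsNoetherianRing R] {B : Ideal R}
    (hB : B.IsRadical) {S : Set R} (hP : P ∈ (B.colon S).minimalPrimes) : ¬ S ⊆ P := by
  rw [hB.colon_eq_sInf] at hP
  exact (mem_of_mem_minimalPrimes_sInf ((B.finite_minimalPrimes_of_isNoetherianRing R).subset
    fun q hq => hq.1) (fun q hq => hq.1.1.1) hP).2

end Ideal

open Cardinal in
theorem Algebra.IsAlgebraic.of_rank_le_aleph0 {K L : Type*} [Field K] [Uncountable K] [Field L]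
    [Algebra K L] (h : Module.rank K L ≤ ℵ₀) : Algebra.IsAlgebraic K L := by
  refine ⟨fun t => not_not.1 fun ht => ?_⟩
  have := (Transcendental.linearIndependent_sub_inv ht).cardinal_lift_le_rank.trans (lift_le.2 h)
  rw [lift_aleph0, lift_le_aleph0] at this
  exact aleph0_lt_mk.not_ge this

namespace MvPolynomial

section

variable {k K σ : Type*} [Field k] [Field K] [Algebra k K]

theorem vanishingIdeal_iUnion {ι : Sort*} (T : ι → Set (σ → K)) :
    vanishingIdeal k (⋃ i, T i) = ⨅ i, vanishingIdeal k (T i) := by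
  ext f
  simp only [mem_vanishingIdeal_iff, Submodule.mem_iInf, Set.mem_iUnion]
  grind

theorem isRadical_vanishingIdeal (V : Set (σ → K)) : (vanishingIdeal k V).IsRadical :=
  fun f ⟨n, hn⟩ x hx => pow_eq_zero_iff'.1 ((map_pow (aeval x) f n).symm.trans (hn x hx)) |>.1

theorem vanishingIdeal_diff_zeroLocus (W : Set (σ → K)) (A : Ideal (MvPolynomial σ k)) :
    vanishingIdeal k (W \ zeroLocus K A) = (vanishingIdeal k W).colon A := by
  ext f
  simp only [mem_vanishingIdeal_iff, Submodule.mem_colon, smul_eq_mul, map_mul]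
  constructor
  · intro h g hg x hxW
    by_cases hxA : x ∈ zeroLocus K A
    · rw [hxA g hg, mul_zero]
    · rw [h x ⟨hxW, hxA⟩, zero_mul]
  · rintro h x ⟨hxW, hxA⟩
    obtain ⟨g, hg, hgx⟩ := not_forall₂.1 hxA
    exact (mul_eq_zero.1 (h g hg x hxW)).resolve_right hgx

end

variable {K : Type*} [Field K] {d : ℕ}

theorem _root_.ZariskiClosed.zeroLocus_vanishingIdeal {V : Set (Fin d → K)}
    (hV : ZariskiClosed V) :
    zeroLocus K (vanishingIdeal K V) = V := by
  obtain ⟨S, rfl⟩ := hV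
  have hS : zeroLocus K (Ideal.span S) = {x | ∀ p ∈ S, eval x p = 0} := by
    rw [zeroLocus_span]; rfl
  rw [← hS]
  exact zeroLocus_vanishingIdeal_galoisConnection.l_u_l_eq_l _

theorem _root_.ZConstructible.exists_basicOpen_subset_of_mem_minimalPrimes
    {C : Set (Fin d → K)} (hC : ZConstructible C) {P : Ideal (MvPolynomial (Fin d) K)}
    (hP : P ∈ (vanishingIdeal K C).minimalPrimes) :
    ∃ a ∉ P, ∀ x ∈ zeroLocus K P, eval x a ≠ 0 → x ∈ C := by
  obtain ⟨r, W, V, hWV, rfl⟩ := hC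
  rw [vanishingIdeal_iUnion] at hP
  obtain ⟨i, hPi⟩ := Ideal.exists_mem_minimalPrimes_of_mem_minimalPrimes_iInf hP
  rw [← (hWV i).2.zeroLocus_vanishingIdeal, vanishingIdeal_diff_zeroLocus] at hPi
  obtain ⟨a, haV, haP⟩ :=
    Set.not_subset.1 (Ideal.not_subset_of_mem_minimalPrimes_colon (isRadical_vanishingIdeal _) hPi)
  refine ⟨a, haP, fun x hxP hxa => Set.mem_iUnion.2 ⟨i, ?_, fun hxV => hxa ?_⟩⟩
  · rw [← (hWV i).1.zeroLocus_vanishingIdeal]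
    exact zeroLocus_anti_mono (Ideal.le_colon.trans hPi.1.2) hxP
  · simpa using haV x hxV

open Cardinal in
theorem rank_le_aleph0 {σ : Type*} [Countable σ] :
    Module.rank K (MvPolynomial σ K) ≤ ℵ₀ := by
  rw [rank_eq_lift, lift_le_aleph0]
  exact mk_le_aleph0

section

variable [IsAlgClosed K] [Uncountable K]

theorem zeroLocus_nonempty_of_ne_top {σ : Type*} [Countable σ]
    {I : Ideal (MvPolynomial σ K)} (hI : I ≠ ⊤) : (zeroLocus K I).Nonempty := by
  obtain ⟨M, hM, hIM⟩ := I.exists_le_maximal hI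
  let F := MvPolynomial σ K ⧸ M
  let := Ideal.Quotient.field M
  have : Algebra.IsAlgebraic K F := .of_rank_le_aleph0 <|
    ((Ideal.Quotient.mkₐ K M).toLinearMap.rank_le_of_surjective
      Ideal.Quotient.mk_surjective).trans rank_le_aleph0
  let e : F ≃ₐ[K] K := (AlgEquiv.ofBijective (Algebra.ofId K F)
    IsAlgClosed.algebraMap_bijective_of_isIntegral).symm
  let φ : MvPolynomial σ K →ₐ[K] K := e.toAlgHom.comp (Ideal.Quotient.mkₐ K M)
  refine ⟨fun s => φ (X s), fun f hf => ?_⟩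
  rw [show aeval (fun s => φ (X s)) = φ from (aeval_unique φ).symm]
  change e (Ideal.Quotient.mk M f) = 0
  rw [Ideal.Quotient.eq_zero_iff_mem.2 (hIM hf), map_zero]

theorem exists_mem_zeroLocus_forall_eval_ne_zero {σ ι : Type*} [Countable σ]
    [Countable ι] {P : Ideal (MvPolynomial σ K)} [P.IsPrime] (a : ι → MvPolynomial σ K)
    (ha : ∀ i, a i ∉ P) : ∃ x ∈ zeroLocus K P, ∀ i, eval x (a i) ≠ 0 := by
  let L := FractionRing (MvPolynomial σ K ⧸ P)
  let g : MvPolynomial σ K →ₐ[K] L :=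
    (IsScalarTower.toAlgHom K (MvPolynomial σ K ⧸ P) L).comp (Ideal.Quotient.mkₐ K P)
  have hg : ∀ f, g f = 0 ↔ f ∈ P := fun f => by
    simp [g, Ideal.Quotient.eq_zero_iff_mem]
  -- Rabinowitsch trick: on the zero locus of `ker ψ`, the variable `X (inr i)` inverts `a i`.
  let ψ : MvPolynomial (σ ⊕ ι) K →ₐ[K] L :=
    aeval (Sum.elim (fun s => g (X s)) fun i => (g (a i))⁻¹)
  have hψ : ∀ f, ψ (rename Sum.inl f) = g f := fun f => by
    rw [aeval_rename]
    exact congrArg (· f) (aeval_unique g).symm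
  obtain ⟨y, hy⟩ := zeroLocus_nonempty_of_ne_top (RingHom.ker_ne_top ψ)
  refine ⟨y ∘ Sum.inl, fun f hf => ?_, fun i hi => ?_⟩
  · simpa [eval_rename, hψ, (hg f).2 hf] using hy (rename Sum.inl f)
  · have := hy (rename Sum.inl (a i) * X (Sum.inr i) - 1) (by
      simp [hψ, ψ, mul_inv_cancel₀ (mt (hg _).1 (ha i))])
    simp [eval_rename, hi] at this

end

end MvPolynomial

/-- Over an uncountable algebraically closed field, a decreasing sequence of
nonempty constructible subsets of affine space has nonempty intersection. -/
theorem iInter_nonempty_of_decreasing_constructible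
    (K : Type*) [Field K] [IsAlgClosed K] [Uncountable K] (d : ℕ)
    (C : ℕ → Set (Fin d → K))
    (hcon : ∀ N, ZConstructible (C N))
    (hdec : ∀ N, C (N + 1) ⊆ C N)
    (hne : ∀ N, (C N).Nonempty) :
    (⋂ N, C N).Nonempty := by
  have hanti : Antitone C := antitone_nat_of_succ_le hdec
  obtain ⟨N₀, hN₀⟩ := monotone_stabilizes_iff_noetherian.2 inferInstance
    ⟨fun N => vanishingIdeal K (C N), fun _ _ h => vanishingIdeal_anti_mono (hanti h)⟩
  have hstable : ∀ n, vanishingIdeal K (C (N₀ + n)) = vanishingIdeal K (C N₀) :=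
    fun n => (hN₀ (N₀ + n) (N₀.le_add_right n)).symm
  have hne_top : vanishingIdeal K (C N₀) ≠ ⊤ := by
    obtain ⟨x, hx⟩ := hne N₀
    rw [Ne, Ideal.eq_top_iff_one, mem_vanishingIdeal_iff]
    exact fun h => one_ne_zero (α := K) (by simpa using h x hx)
  obtain ⟨P, hP⟩ := Ideal.nonempty_minimalPrimes hne_top
  have : P.IsPrime := hP.1.1
  choose a haP ha using fun n => (hcon (N₀ + n)).exists_basicOpen_subset_of_mem_minimalPrimes
    ((hstable n).symm ▸ hP)
  obtain ⟨x, hxP, hxa⟩ := exists_mem_zeroLocus_forall_eval_ne_zero a haP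
  exact ⟨x, Set.mem_iInter.2 fun N => hanti (N.le_add_left N₀) (ha N x hxP (hxa N))⟩
end

section
/- Let K = \bar{Q} be the field of algebraic numbers, enumerated as α_0, α_1, α_2, …. Define the map G : K[[x]] → K[[x]] on a power series y(x) = Σ_{k≥0} y_k x^k by G(y(x)) = Σ_{l≥1} ((y_0 − α_{l−1}) y_l − 1) x^l. Then there is no power series y(x) ∈ K[[x]] with G(y(x)) = 0. -/
theorem not_forall_sub_apply_mul_eq_one {R : Type*} [NonAssocRing R] [Nontrivial R]
    {α : ℕ → R} (hα : Function.Surjective α) (a : R) (b : ℕ → R) :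
    ¬ ∀ n, (a - α n) * b n = 1 := by
  obtain ⟨n, rfl⟩ := hα a
  intro h
  simpa using h n

/-- Let `K = ℚ̄` be the algebraic numbers, with an enumeration `α : ℕ → K`
(a surjection). The textile map `G` sending `y = Σ y_k x^k` to
`Σ_{l ≥ 1} ((y_0 - α_{l-1}) y_l - 1) x^l` has no zero: there is no power series
`y` with `(y_0 - α_{l-1}) y_l = 1` for all `l ≥ 1`. -/
theorem no_exact_solution_algebraic_numbers
    (α : ℕ → AlgebraicClosure ℚ) (hα : Function.Surjective α) :
    ¬ ∃ y : PowerSeries (AlgebraicClosure ℚ),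
      ∀ l : ℕ, 1 ≤ l →
        (PowerSeries.coeff 0 y - α (l - 1)) *
          PowerSeries.coeff l y - 1 = 0 := by
  rintro ⟨y, hy⟩
  exact not_forall_sub_apply_mul_eq_one hα (PowerSeries.coeff 0 y)
    (fun n ↦ PowerSeries.coeff (n + 1) y) fun n ↦ sub_eq_zero.mp (hy (n + 1) n.succ_pos)
end

section
/- Let K = \bar{Q} with enumeration α_0, α_1, …, and define G : K[[x]] → K[[x]] by G(Σ_{k≥0} y_k x^k) = Σ_{l≥1} ((y_0 − α_{l−1}) y_l − 1) x^l. For every integer N ≥ 1, the polynomial y_N(x) = α_N + Σ_{k=1}^{N} (1/(α_N − α_{k−1})) x^k satisfies G(y_N(x)) ≡ 0 modulo x^{N+1}. Hence G = 0 admits approximate solutions up to every degree, while (by the previous statement) it admits no exact solution. -/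
open PowerSeries

/-!
Taking `y_0 = α_N`, each equation `(y_0 - α_{l-1}) y_l = 1` can be solved for `y_l` as long as
`α_N ≠ α_{l-1}`, which injectivity guarantees for `l ≤ N`. An exact solution is impossible once
`α` is onto: its constant term is some `α_n`, and the equation for `l = n + 1` then reads `0 = 1`.
-/

section Approximation

variable {K : Type*} [Field K] (α : ℕ → K) (N : ℕ)

noncomputable def approxSolution : K⟦X⟧ :=
  PowerSeries.mk fun k => if k = 0 then α N else if k ≤ N then (α N - α (k - 1))⁻¹ else 0

@[simp]
theorem coeff_zero_approxSolution : coeff 0 (approxSolution α N) = α N := by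
  simp [approxSolution]

theorem coeff_approxSolution_of_le {l : ℕ} (hl : 1 ≤ l) (hlN : l ≤ N) :
    coeff l (approxSolution α N) = (α N - α (l - 1))⁻¹ := by
  simp [approxSolution, Nat.one_le_iff_ne_zero.mp hl, hlN]

variable {α N}

theorem sub_mul_coeff_approxSolution_eq_one (hα : Function.Injective α) {l : ℕ}
    (hl : 1 ≤ l) (hlN : l ≤ N) :
    (coeff 0 (approxSolution α N) - α (l - 1)) * coeff l (approxSolution α N) = 1 := by
  have hne : α N - α (l - 1) ≠ 0 := sub_ne_zero.mpr (hα.ne (by omega))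
  rw [coeff_zero_approxSolution, coeff_approxSolution_of_le α N hl hlN, mul_inv_cancel₀ hne]

end Approximation

theorem exists_sub_mul_ne_one_of_surjective {R : Type*} [Ring R] [Nontrivial R] {α : ℕ → R}
    (hα : Function.Surjective α) (a : R) (b : ℕ → R) : ∃ n, (a - α n) * b n ≠ 1 := by
  obtain ⟨n, rfl⟩ := hα a
  exact ⟨n, by simp⟩

/-- Over `K = ℚ̄` with an injective enumeration `α`, the polynomial
`y_N(x) = α_N + Σ_{k=1}^N (α_N - α_{k-1})⁻¹ x^k` is an approximate solution of
`G = 0` modulo `x^{N+1}`, where `G(Σ y_k x^k) = Σ_{l≥1} ((y_0 - α_{l-1}) y_l - 1) x^l`;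
hence `G = 0` has approximate solutions up to every degree, while (if `α` is also
surjective, i.e. an enumeration of all of `ℚ̄`) it has no exact solution. -/
theorem approx_solutions_but_no_exact
    (α : ℕ → AlgebraicClosure ℚ) (hinj : Function.Injective α) :
    (∀ N : ℕ, 1 ≤ N →
      ∀ l : ℕ, 1 ≤ l → l ≤ N →
        (PowerSeries.coeff (R := AlgebraicClosure ℚ) 0
            (PowerSeries.mk fun k =>
              if k = 0 then α N
              else if k ≤ N then (α N - α (k - 1))⁻¹ else 0) - α (l - 1)) *
          PowerSeries.coeff (R := AlgebraicClosure ℚ) l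
            (PowerSeries.mk fun k =>
              if k = 0 then α N
              else if k ≤ N then (α N - α (k - 1))⁻¹ else 0) - 1 = 0) ∧
    (Function.Surjective α →
      ¬ ∃ y : PowerSeries (AlgebraicClosure ℚ),
        ∀ l : ℕ, 1 ≤ l →
          (PowerSeries.coeff (R := AlgebraicClosure ℚ) 0 y - α (l - 1)) *
            PowerSeries.coeff (R := AlgebraicClosure ℚ) l y - 1 = 0) := by
  refine ⟨fun N _ l hl hlN =>
    sub_eq_zero.mpr (sub_mul_coeff_approxSolution_eq_one hinj hl hlN), ?_⟩
  rintro hsurj ⟨y, hy⟩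
  obtain ⟨n, hn⟩ :=
    exists_sub_mul_ne_one_of_surjective hsurj (coeff 0 y) (fun n => coeff (n + 1) y)
  exact hn (sub_eq_zero.mp (hy (n + 1) n.succ_pos))
end

section
/- Let K be an uncountable algebraically closed field and let G : K[[x]]^m → K[[x]]^q be a textile map. Then there exists l ∈ ℕ (depending on G) such that: if G = 0 admits an approximate solution up to degree l, i.e., some y(x) ∈ K[[x]]^m with G(y(x)) ≡ 0 mod (x)^l, then G = 0 admits an exact solution y(x) ∈ K[[x]]^m with G(y(x)) = 0. -/
/-!
Approximate solutions to every order make every finite subsystem of the coefficient equations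
`P j β = 0` solvable. These equations involve only countably many unknowns, and over an
uncountable algebraically closed field `K` the Nullstellensatz holds for countably many
variables: a residue field of the polynomial ring has countable dimension over `K`, so it is
algebraic over `K` and hence equal to `K`. By compactness the whole system then has a common
zero, i.e. an exact solution. If approximate solutions fail at some order `l`, that `l` works
vacuously.
-/

/-- Total degree of a multi-exponent `β : Fin n →₀ ℕ`. -/
def expDeg {n : ℕ} (β : Fin n →₀ ℕ) : ℕ := β.sum fun _ e => e

/-- The family of coefficients of a tuple of power series. -/
noncomputable def coeffFun {K : Type*} [Field K] {n m : ℕ}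
    (y : Fin m → MvPowerSeries (Fin n) K) : Fin m × (Fin n →₀ ℕ) → K :=
  fun v => MvPowerSeries.coeff v.2 (y v.1)

open Cardinal

universe u v

theorem Algebra.IsAlgebraic.of_lift_rank_lt {K : Type u} {L : Type v}
    [Field K] [Field L] [Algebra K L]
    (h : lift.{u} (Module.rank K L) < lift.{v} #K) : Algebra.IsAlgebraic K L := by
  refine ⟨fun x => not_not.mp fun hx => h.not_ge ?_⟩
  exact (Transcendental.linearIndependent_sub_inv hx).cardinal_lift_le_rank

namespace MvPolynomial

theorem rank_quotient_le_aleph0 {K : Type*} [Field K] {σ : Type*} [Countable σ]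
    (I : Ideal (MvPolynomial σ K)) : Module.rank K (MvPolynomial σ K ⧸ I) ≤ ℵ₀ := by
  refine (LinearMap.rank_le_of_surjective (Ideal.Quotient.mkₐ K I).toLinearMap
    Ideal.Quotient.mk_surjective).trans ?_
  rw [rank_eq_lift, lift_le_aleph0]
  exact mk_le_aleph0

theorem exists_eval_eq_zero_of_ne_top {K : Type*} [Field K] [IsAlgClosed K] [Uncountable K]
    {σ : Type*} [Countable σ] {I : Ideal (MvPolynomial σ K)} (hI : I ≠ ⊤) :
    ∃ c : σ → K, ∀ f ∈ I, eval c f = 0 := by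
  obtain ⟨M, hM, hIM⟩ := Ideal.exists_le_maximal I hI
  let : Field (MvPolynomial σ K ⧸ M) := Ideal.Quotient.field M
  have : Algebra.IsAlgebraic K (MvPolynomial σ K ⧸ M) :=
    .of_lift_rank_lt <| (lift_le_aleph0.mpr (rank_quotient_le_aleph0 M)).trans_lt
      (aleph0_lt_lift.mpr aleph0_lt_mk)
  let e : K ≃ₐ[K] MvPolynomial σ K ⧸ M :=
    AlgEquiv.ofBijective (Algebra.ofId K _) IsAlgClosed.algebraMap_bijective_of_isIntegral
  let ψ : MvPolynomial σ K →ₐ[K] K := e.symm.toAlgHom.comp (Ideal.Quotient.mkₐ K M)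
  refine ⟨ψ ∘ X, fun f hf => ?_⟩
  rw [← coe_aeval_eq_eval, ← aeval_unique ψ]
  simp [ψ, Ideal.Quotient.eq_zero_iff_mem.mpr (hIM hf)]

theorem span_range_ne_top_of_forall_finset {R σ ι : Type*} [CommRing R] [Nontrivial R]
    {f : ι → MvPolynomial σ R}
    (h : ∀ s : Finset ι, ∃ c : σ → R, ∀ i ∈ s, eval c (f i) = 0) :
    Ideal.span (Set.range f) ≠ ⊤ := by
  intro htop
  have hone : (1 : MvPolynomial σ R) ∈ ⨆ i, Submodule.span (MvPolynomial σ R) {f i} := by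
    rw [← Submodule.span_range_eq_iSup, ← Ideal.span, htop]
    exact Submodule.mem_top
  obtain ⟨s, hs⟩ := Submodule.exists_finset_of_mem_iSup _ hone
  obtain ⟨c, hc⟩ := h s
  have hker : (⨆ i ∈ s, Submodule.span (MvPolynomial σ R) {f i}) ≤ RingHom.ker (eval c) :=
    iSup₂_le fun i hi => (Submodule.span_singleton_le_iff_mem _ _).mpr (hc i hi)
  simpa using hker hs

theorem exists_common_zero_of_forall_finset {K : Type*} [Field K] [IsAlgClosed K]
    [Uncountable K] {σ ι : Type*} [Countable σ] {f : ι → MvPolynomial σ K}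
    (h : ∀ s : Finset ι, ∃ c : σ → K, ∀ i ∈ s, eval c (f i) = 0) :
    ∃ c : σ → K, ∀ i, eval c (f i) = 0 := by
  obtain ⟨c, hc⟩ := exists_eval_eq_zero_of_ne_top (span_range_ne_top_of_forall_finset h)
  exact ⟨c, fun i => hc _ (Ideal.subset_span ⟨i, rfl⟩)⟩

end MvPolynomial

theorem coeffFun_surjective (K : Type*) [Field K] (n m : ℕ) :
    Function.Surjective (coeffFun (K := K) (n := n) (m := m)) :=
  fun c => ⟨fun i β => c (i, β), funext fun _ => MvPowerSeries.coeff_apply _ _⟩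

theorem strong_approximation_textile_bound_general
    (K : Type*) [Field K] [IsAlgClosed K] [Uncountable K]
    (n m q : ℕ)
    (P : Fin q → (Fin n →₀ ℕ) → MvPolynomial (Fin m × (Fin n →₀ ℕ)) K) :
    ∃ l : ℕ,
      (∃ y : Fin m → MvPowerSeries (Fin n) K,
        ∀ j : Fin q, ∀ β : Fin n →₀ ℕ, expDeg β < l →
          MvPolynomial.eval (coeffFun y) (P j β) = 0) →
      ∃ y : Fin m → MvPowerSeries (Fin n) K,
        ∀ j : Fin q, ∀ β : Fin n →₀ ℕ,
          MvPolynomial.eval (coeffFun y) (P j β) = 0 := by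
  by_cases happrox : ∀ l : ℕ, ∃ y : Fin m → MvPowerSeries (Fin n) K,
      ∀ j : Fin q, ∀ β : Fin n →₀ ℕ, expDeg β < l →
        MvPolynomial.eval (coeffFun y) (P j β) = 0
  · refine ⟨0, fun _ => ?_⟩
    have hfinite (s : Finset (Fin q × (Fin n →₀ ℕ))) :
        ∃ c, ∀ i ∈ s, MvPolynomial.eval c (P i.1 i.2) = 0 := by
      obtain ⟨y, hy⟩ := happrox (s.sup fun i => expDeg i.2).succ
      exact ⟨coeffFun y, fun i hi => hy i.1 i.2
        (Nat.lt_succ_of_le (Finset.le_sup (f := fun i => expDeg i.2) hi))⟩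
    obtain ⟨c, hc⟩ := MvPolynomial.exists_common_zero_of_forall_finset hfinite
    obtain ⟨y, rfl⟩ := coeffFun_surjective K n m c
    exact ⟨y, fun j β => hc (j, β)⟩
  · obtain ⟨l, hl⟩ := not_forall.mp happrox
    exact ⟨l, fun h => (hl h).elim⟩

/-- Strong Approximation Theorem for Textile Maps (uncountable algebraically closed
field): there is an `l` (depending on `G`) such that if `G = 0` has an approximate
solution modulo `(x)^l` then it has an exact solution. The textile map
`G : K[[x]]^m → K[[x]]^q` is encoded by its coefficient polynomials `P j β`. -/
theorem strong_approximation_textile_bound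
    (K : Type*) [Field K] [IsAlgClosed K] [Uncountable K]
    (n m q : ℕ)
    (P : Fin q → (Fin n →₀ ℕ) → MvPolynomial (Fin m × (Fin n →₀ ℕ)) K)
    (D : ℕ → ℕ) (hD : ∀ N, N ≤ D N)
    (hdep : ∀ N : ℕ, ∀ j : Fin q, ∀ β : Fin n →₀ ℕ, expDeg β < N →
      ∀ v ∈ (P j β).vars, expDeg v.2 < D N) :
    ∃ l : ℕ,
      (∃ y : Fin m → MvPowerSeries (Fin n) K,
        ∀ j : Fin q, ∀ β : Fin n →₀ ℕ, expDeg β < l →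
          MvPolynomial.eval (coeffFun y) (P j β) = 0) →
      ∃ y : Fin m → MvPowerSeries (Fin n) K,
        ∀ j : Fin q, ∀ β : Fin n →₀ ℕ,
          MvPolynomial.eval (coeffFun y) (P j β) = 0 :=
  strong_approximation_textile_bound_general K n m q P
end
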